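/- For fixed complex numbers I_1,…,I_{g+1}, V_1,…,V_{g+1}, there exist complex numbers c_0, c_1, …, c_g, depending only on I and V (not on x or y), such that for all x ∈ ℂ and all y ∈ ℂ with y ≠ 0: y·det(x·𝟙 + L) = y² + y·(x^{g+1} + c_g x^g + ⋯ + c_1 x + c_0) + Π_{i=1}^{g+1} I_i V_i. In other words, the spectral polynomial f̃(x,y) = y·det(x·𝟙 + L) is quadratic and monic in y, its y-coefficient is a monic polynomial of degree g+1 in x, and its constant term is c_{−1} = Π_{i=1}^{g+1} I_i V_i. -/

import Mathlib

/-- The Lax matrix `L(I;V)` of the periodic discrete Toda lattice (0-indexed: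
row/column `i : Fin (g+1)` corresponds to the 1-indexed `i+1`).  Its entries are
`L_{ii} = I_{i+1} + V_i` (cyclically, so the last diagonal entry is
`I_1 + V_{g+1}`), `L_{i,i+1} = 1`, `L_{i+1,i} = I_{i+1} V_{i+1}`,
`L_{1,g+1} = (-1)^g I_1 V_1 / y`, `L_{g+1,1} = (-1)^g y`,
all other entries `0`. -/
noncomputable def todaLax (g : ℕ) (I V : Fin (g + 1) → ℂ) (y : ℂ) :
    Matrix (Fin (g + 1)) (Fin (g + 1)) ℂ :=
  Matrix.of fun i j =>
    (if j = i then I (i + 1) + V i else 0)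
    + (if (i : ℕ) + 1 = (j : ℕ) then 1 else 0)
    + (if (j : ℕ) + 1 = (i : ℕ) then I i * V i else 0)
    + (if (i : ℕ) = 0 ∧ (j : ℕ) = g then (-1) ^ g * I 0 * V 0 / y else 0)
    + (if (i : ℕ) = g ∧ (j : ℕ) = 0 then (-1) ^ g * y else 0)

/-!
Write `x • 1 + L` as a tridiagonal matrix `T` (diagonal `x + I_{i+1} + V_i`, superdiagonal `1`,
subdiagonal `I_{i+1} V_{i+1}`) plus the corner entries `a = (-1)^g I_1 V_1 / y` at `(1, g+1)` and
`b = (-1)^g y` at `(g+1, 1)`. Expanding the determinant along the two rows containing them,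
`det (T + a E₁ + b E₂) = det T + a adj(T)_{g+1,1} + b (adj(T)_{1,g+1} + a D)` with `D` free of `y`.
The corner cofactors of a tridiagonal matrix are, up to the sign `(-1)^g`, the products of its
sub- and superdiagonal entries, so `y · det = y² + y q(x) + ∏ I_i V_i` with `q` independent of `y`
(note `ab = I_1 V_1`). Putting `y = 1` shows that `q` is a characteristic polynomial minus a
constant, hence monic of degree `g + 1`.
-/

open Matrix Polynomial

namespace Matrix

variable {R : Type*} [CommRing R]

section single

variable {n : Type*} [DecidableEq n]

theorem det_add_single [Fintype n] (M : Matrix n n R) (i j : n) (u : R) :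
    det (M + single i j u) = det M + u * adjugate M j i := by
  have hrow : M + single i j u = M.updateRow i (M i + u • Pi.single j 1) := by
    ext a b
    by_cases ha : a = i
    · subst ha
      by_cases hb : b = j
      · simp [hb]
      · simp [hb, Ne.symm hb]
    · simp [Ne.symm ha, ha]
  rw [hrow, det_updateRow_add, updateRow_eq_self, det_updateRow_smul, adjugate_apply]

theorem updateRow_add_single {i j : n} (hij : i ≠ j) (M : Matrix n n R) (u : R) (r : n → R) :
    (M + single i j u).updateRow j r = M.updateRow j r + single i j u := by
  ext a b
  by_cases ha : a = j
  · subst ha; simp [single_apply_of_row_ne hij]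
  · simp [ha]

theorem det_add_single_add_single [Fintype n] {i j : n} (hij : i ≠ j) (M : Matrix n n R)
    (u v : R) :
    det (M + single i j u + single j i v) =
      det M + u * adjugate M j i +
        v * (adjugate M i j + u * adjugate (M.updateRow j (Pi.single i 1)) j i) := by
  rw [det_add_single, det_add_single, adjugate_apply (M + single i j u),
    updateRow_add_single hij, det_add_single, ← adjugate_apply]

end single

def tridiagonal {n : ℕ} (d f e : Fin (n + 1) → R) : Matrix (Fin (n + 1)) (Fin (n + 1)) R :=
  of fun i j =>
    if j = i then d i else if (i : ℕ) + 1 = j then f i else if (j : ℕ) + 1 = i then e i else 0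

variable {n : ℕ} (d f e : Fin (n + 1) → R)

theorem adjugate_tridiagonal_zero_last :
    adjugate (tridiagonal d f e) 0 (Fin.last n) = (-1) ^ n * ∏ i : Fin n, f i.castSucc := by
  rw [adjugate_fin_succ_eq_det_submatrix, det_of_isLowerTriangular]
  · simp +arith [tridiagonal, Fin.ext_iff]
  · intro i j hij
    have : (i : ℕ) < j := hij
    simp only [tridiagonal, submatrix_apply, of_apply, Fin.succAbove_last, Fin.zero_succAbove,
      Fin.ext_iff, Fin.val_castSucc, Fin.val_succ]
    split_ifs <;> first | rfl | omega

theorem adjugate_tridiagonal_last_zero :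
    adjugate (tridiagonal d f e) (Fin.last n) 0 = (-1) ^ n * ∏ i : Fin n, e i.succ := by
  rw [adjugate_fin_succ_eq_det_submatrix, det_of_isUpperTriangular]
  · simp +arith [tridiagonal, Fin.ext_iff]
  · intro i j hij
    have : (j : ℕ) < i := hij
    simp only [tridiagonal, submatrix_apply, of_apply, Fin.succAbove_last, Fin.zero_succAbove,
      Fin.ext_iff, Fin.val_castSucc, Fin.val_succ]
    split_ifs <;> first | rfl | omega

end Matrix

theorem Polynomial.Monic.eval_eq_pow_add_sum_coeff {R : Type*} [CommRing R] {p : R[X]} {n : ℕ}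
    (hp : p.Monic) (hn : p.natDegree = n) (x : R) :
    p.eval x = x ^ n + ∑ k : Fin n, p.coeff k * x ^ (k : ℕ) := by
  rw [eval_eq_sum_range, hn, Finset.sum_range_succ, ← hn, hp.coeff_natDegree, hn,
    Fin.sum_univ_eq_sum_range (fun k => p.coeff k * x ^ k), one_mul, add_comm]

theorem smul_one_add_todaLax (g : ℕ) (I V : Fin (g + 1) → ℂ) (x y : ℂ) :
    x • (1 : Matrix (Fin (g + 1)) (Fin (g + 1)) ℂ) + todaLax g I V y =
      tridiagonal (fun i => x + (I (i + 1) + V i)) 1 (fun i => I i * V i) +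
        single 0 (Fin.last g) ((-1) ^ g * I 0 * V 0 / y) +
          single (Fin.last g) 0 ((-1) ^ g * y) := by
  ext i j
  simp only [Matrix.add_apply, Matrix.smul_apply, one_apply, todaLax, tridiagonal, single_apply,
    of_apply, Pi.one_apply, smul_eq_mul, Fin.ext_iff, Fin.val_zero, Fin.val_last]
  split_ifs <;> first | omega | ring1

theorem exists_mul_det_smul_one_add_todaLax (g : ℕ) (hg : 1 ≤ g) (I V : Fin (g + 1) → ℂ) :
    ∃ q : ℂ → ℂ, ∀ x y : ℂ, y ≠ 0 →
      y * (x • (1 : Matrix (Fin (g + 1)) (Fin (g + 1)) ℂ) + todaLax g I V y).det =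
        y ^ 2 + y * q x + ∏ i, I i * V i := by
  have h0 : (0 : Fin (g + 1)) ≠ Fin.last g := by simp [Fin.ext_iff]; omega
  let T x := tridiagonal (fun i => x + (I (i + 1) + V i)) 1 (fun i => I i * V i)
  let D x := adjugate ((T x).updateRow (Fin.last g) (Pi.single 0 1)) (Fin.last g) 0
  refine ⟨fun x => (T x).det + I 0 * V 0 * D x, fun x y hy => ?_⟩
  have hsign : ((-1 : ℂ) ^ g) ^ 2 = 1 := by rw [← pow_mul, pow_mul', neg_one_sq, one_pow]
  rw [smul_one_add_todaLax, det_add_single_add_single h0, adjugate_tridiagonal_zero_last,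
    adjugate_tridiagonal_last_zero, Fin.prod_univ_succ]
  simp only [Pi.one_apply, Finset.prod_const_one, mul_one]
  field_simp
  linear_combination (y ^ 2 + I 0 * V 0 * ∏ i : Fin g, I i.succ * V i.succ +
    y * I 0 * V 0 * D x) * hsign

theorem todaLax_spectral_polynomial (g : ℕ) (hg : 1 ≤ g) (I V : Fin (g + 1) → ℂ) :
    ∃ c : Fin (g + 1) → ℂ, ∀ x y : ℂ, y ≠ 0 →
      y * (x • (1 : Matrix (Fin (g + 1)) (Fin (g + 1)) ℂ) + todaLax g I V y).det =
        y ^ 2 + y * (x ^ (g + 1) + ∑ k : Fin (g + 1), c k * x ^ (k : ℕ)) +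
          ∏ i, I i * V i := by
  obtain ⟨q, hq⟩ := exists_mul_det_smul_one_add_todaLax g hg I V
  set p : ℂ[X] := (-todaLax g I V 1).charpoly - C (1 + ∏ i, I i * V i)
  have hdeg : p.natDegree = g + 1 := by
    rw [natDegree_sub_C, charpoly_natDegree_eq_dim, Fintype.card_fin]
  have hmonic : p.Monic := (charpoly_monic _).sub_of_left <| degree_C_le.trans_lt <| by
    rw [charpoly_degree_eq_dim, Fintype.card_fin]; exact_mod_cast Nat.succ_pos g
  have heval (x : ℂ) : p.eval x = q x := by
    rw [eval_sub, eval_C, eval_charpoly, scalar_apply, sub_neg_eq_add, ← smul_one_eq_diagonal]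
    linear_combination hq x 1 one_ne_zero
  refine ⟨fun k => p.coeff k, fun x y hy => ?_⟩
  rw [hq x y hy, ← heval, hmonic.eval_eq_pow_add_sum_coeff hdeg]
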